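/- For 0 < c₀ ≤ 1, with β(t) and K₀ as above and x(t) = t + (1/π) arccot(K₀ tanh(β(t))), one has x′(t) > 0 if |sinh(β(t))| > √((c₀−c₀²)/2) and x′(t) < 0 if |sinh(β(t))| < √((c₀−c₀²)/2). -/

import Mathlib

/-!
Writing `s = sinh (β t)`, the chain rule gives
`x′(t) = 1 - c₀K₀² / (cosh² β(t) + K₀² sinh² β(t))`, and with `c₀K₀² = 2 - c₀` and
`cosh² = 1 + sinh²` this is `(2s² - (c₀ - c₀²)) / (c₀ + 2s²)`. The denominator is positive,
so the sign of `x′(t)` is that of `s² - (c₀ - c₀²)/2`.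
-/

open Real

noncomputable def arccot (y : ℝ) : ℝ := π / 2 - Real.arctan y

theorem hasDerivAt_tanh (u : ℝ) : HasDerivAt tanh (1 / cosh u ^ 2) u := by
  rw [show tanh = fun v => sinh v / cosh v from funext tanh_eq_sinh_div_cosh]
  refine ((hasDerivAt_sinh u).div (hasDerivAt_cosh u) (cosh_pos u).ne').congr_deriv ?_
  rw [← cosh_sq_sub_sinh_sq u]
  ring

theorem hasDerivAt_arccot (y : ℝ) : HasDerivAt arccot (-(1 / (1 + y ^ 2))) y :=
  (hasDerivAt_arctan y).const_sub (π / 2)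

theorem hasDerivAt_arccot_mul_tanh (K u : ℝ) :
    HasDerivAt (fun v => arccot (K * tanh v)) (-K / (cosh u ^ 2 + K ^ 2 * sinh u ^ 2)) u := by
  refine ((hasDerivAt_arccot (K * tanh u)).comp u ((hasDerivAt_tanh u).const_mul K)).congr_deriv ?_
  have hcosh := (cosh_pos u).ne'
  rw [tanh_eq_sinh_div_cosh]
  field_simp

theorem hasDerivAt_add_inv_pi_mul_arccot_mul_tanh {β : ℝ → ℝ} {β' t : ℝ} (K : ℝ)
    (hβ : HasDerivAt β β' t) :
    HasDerivAt (fun s => s + 1 / π * arccot (K * tanh (β s)))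
      (1 - K * β' / (π * (cosh (β t) ^ 2 + K ^ 2 * sinh (β t) ^ 2))) t := by
  refine ((hasDerivAt_id t).add
    (((hasDerivAt_arccot_mul_tanh K (β t)).comp t hβ).const_mul (1 / π))).congr_deriv ?_
  have hπ := pi_pos.ne'
  field_simp
  ring

theorem one_sub_mul_sq_div_eq_of_mul_sq_eq_two_sub (c K s : ℝ) (hc : 0 < c) (hK : c * K ^ 2 = 2 - c) :
    1 - c * K ^ 2 / (s ^ 2 + 1 + K ^ 2 * s ^ 2) = (2 * s ^ 2 - (c - c ^ 2)) / (c + 2 * s ^ 2) := by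
  have h1 : 0 < s ^ 2 + 1 + K ^ 2 * s ^ 2 := by positivity
  have h2 : 0 < c + 2 * s ^ 2 := by positivity
  field_simp
  linear_combination (-c - c * s ^ 2) * hK

theorem x_deriv_sign_tanh_branch (c₀ k : ℝ) (hc₀ : 0 < c₀) (hc₀' : c₀ ≤ 1)
    (K₀ : ℝ) (hK₀ : K₀ = Real.sqrt ((2 - c₀) / c₀))
    (β : ℝ → ℝ) (hβ : ∀ t, β t = (c₀ * K₀ / 2) * (2 * π * t + k))
    (x : ℝ → ℝ)
    (hx : ∀ t, x t = t + (1 / π) * arccot (K₀ * Real.tanh (β t))) :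
    ∀ t : ℝ,
      (|Real.sinh (β t)| > Real.sqrt ((c₀ - c₀ ^ 2) / 2) → deriv x t > 0) ∧
      (|Real.sinh (β t)| < Real.sqrt ((c₀ - c₀ ^ 2) / 2) → deriv x t < 0) := by
  intro t
  have hK : c₀ * K₀ ^ 2 = 2 - c₀ := by
    rw [hK₀, sq_sqrt (div_nonneg (by linarith) hc₀.le)]
    field_simp
  have hβ' : HasDerivAt β (c₀ * K₀ * π) t := by
    rw [funext hβ]
    refine ((((hasDerivAt_id t).const_mul (2 * π)).add_const k).const_mul _).congr_deriv ?_
    ring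
  set s := sinh (β t)
  have hderiv : deriv x t = (2 * s ^ 2 - (c₀ - c₀ ^ 2)) / (c₀ + 2 * s ^ 2) := by
    rw [funext hx, (hasDerivAt_add_inv_pi_mul_arccot_mul_tanh K₀ hβ').deriv, cosh_sq,
      ← one_sub_mul_sq_div_eq_of_mul_sq_eq_two_sub c₀ K₀ s hc₀ hK]
    have hπ := pi_pos.ne'
    field_simp
    ring
  have hden : 0 < c₀ + 2 * s ^ 2 := by positivity
  refine ⟨fun h => ?_, fun h => ?_⟩
  · have : (c₀ - c₀ ^ 2) / 2 < s ^ 2 := by simpa using lt_sq_of_sqrt_lt h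
    rw [hderiv]
    exact div_pos (by linarith) hden
  · have : s ^ 2 < (c₀ - c₀ ^ 2) / 2 := by simpa using (lt_sqrt (abs_nonneg s)).mp h
    rw [hderiv]
    exact div_neg_of_neg_of_pos (by linarith) hden
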